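/- Assume σ_β(Φ_K) = Φ_K for every β ∈ Φ_K. Let α ∈ Φ_K ∩ Φ⁺ and w ∈ W satisfy l(σ_α w) = l(w) + 1. Then l_K(σ_α w) = l_K(w) + 1. -/

import Mathlib

open Finset
open scoped RealInnerProductSpace

noncomputable section

variable {E : Type*} [NormedAddCommGroup E] [InnerProductSpace ℝ E] [FiniteDimensional ℝ E]

/-- The orthogonal reflection `σ_α` in the hyperplane orthogonal to `α`; for `α ≠ 0` it is
given by the formula `σ_α v = v - (2⟪v,α⟫/⟪α,α⟫) • α`. -/
noncomputable def sigmaRefl (α : E) : E ≃ₗᵢ[ℝ] E :=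
  Submodule.reflection (ℝ ∙ α)ᗮ

/-- The Weyl group `W`: the subgroup of the orthogonal group of `E` generated by the
reflections `σ_α` for `α ∈ Φ`. -/
def Weyl (Φ : Finset E) : Subgroup (E ≃ₗᵢ[ℝ] E) :=
  Subgroup.closure {g | ∃ α ∈ Φ, g = sigmaRefl α}

variable [DecidableEq E]

/-- `Φ⁻ = -Φ⁺`. -/
def negSet (Pos : Finset E) : Finset E := Pos.image (fun x => -x)

/-- Length `l(w) = #(Φ⁺ ∩ wΦ⁻)`. -/
def len (Pos : Finset E) (w : E ≃ₗᵢ[ℝ] E) : ℕ :=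
  (Pos ∩ (negSet Pos).image w).card

/-- Compact length `l_K(w) = #(Φ⁺ ∩ wΦ⁻ ∩ Φ_K)`. -/
def lenK (Pos ΦK : Finset E) (w : E ≃ₗᵢ[ℝ] E) : ℕ :=
  (Pos ∩ (negSet Pos).image w ∩ ΦK).card

/-- `x → y` iff `x = σ_α y` for some `α ∈ Φ` and `l(x) = l(y) + 1`. -/
def Arrow (Φ Pos : Finset E) (x y : E ≃ₗᵢ[ℝ] E) : Prop :=
  (∃ α ∈ Φ, x = sigmaRefl α * y) ∧ len Pos x = len Pos y + 1

/-- Bruhat order: `x < y` iff there is a chain `y → u₁ → ⋯ → u_k → x`. -/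
def BruhatLT (Φ Pos : Finset E) (x y : E ≃ₗᵢ[ℝ] E) : Prop :=
  Relation.TransGen (Arrow Φ Pos) y x

/-! Write `N(w) = Φ⁺ ∩ wΦ⁻`, so that `l(w) = #N(w)` and `l_K(w) = #(N(w) ∩ Φ_K)`, and put
`S = N(σ_α)`. For every `K` stable under `σ_α` and `-1`, the map `σ_α` matches
`(N(σ_α w) \ S) ∩ K` with `(N(w) \ S) ∩ K`, and `-σ_α` matches `N(σ_α w) ∩ S ∩ K` with
`(S \ N(w)) ∩ K`; so the length grows by `#((S \ N(w)) ∩ K) - #(N(w) ∩ S ∩ K)`.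

The involution `-σ_α` of `S` fixes `α`, and `β - σ_α β` is a positive multiple of `α`. Applying
`w⁻¹` and the functional `⟪f, ·⟫`, a pair `{β, -σ_α β}` can lie inside `N(w)` only if `α` does,
and outside only if `α` does not. For `K = Φ` the growth is `1`, which forces `α ∉ N(w)` and
makes every other pair meet `N(w)` exactly once. Since `S ∩ Φ_K` is a union of such pairs and
`{α}`, the growth is `1` for `K = Φ_K` as well. -/

section Involution

variable {ι : Type*} [DecidableEq ι] {φ : ι → ι}

lemma Function.Involutive.mem_finset_image (hφ : Function.Involutive φ) {s : Finset ι} {y : ι} :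
    y ∈ s.image φ ↔ φ y ∈ s := by
  conv_lhs => rw [← hφ y]
  exact hφ.injective.mem_finset_image

lemma card_inter_eq_of_involutive (hφ : Function.Involutive φ) {A B K : Finset ι}
    (hAB : ∀ x ∈ A, φ x ∈ B) (hBA : ∀ x ∈ B, φ x ∈ A) (hK : ∀ x ∈ K, φ x ∈ K) :
    #(A ∩ K) = #(B ∩ K) := by
  refine card_nbij' φ φ (fun x hx => ?_) (fun x hx => ?_) (fun x _ => hφ x) (fun x _ => hφ x)
  · obtain ⟨hxA, hxK⟩ := mem_inter.mp hx
    exact mem_inter.mpr ⟨hAB x hxA, hK x hxK⟩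
  · obtain ⟨hxB, hxK⟩ := mem_inter.mp hx
    exact mem_inter.mpr ⟨hBA x hxB, hK x hxK⟩

lemma card_inter_eq_card_sdiff_inter_add_card_inter_inter (A S K : Finset ι) :
    #(A ∩ K) = #((A \ S) ∩ K) + #(A ∩ S ∩ K) := by
  rw [← card_sdiff_add_card_inter (A ∩ K) S, sdiff_inter_right_comm, inter_right_comm]

variable {S N : Finset ι} {a : ι}

lemma notMem_of_card_sdiff_eq_card_inter_add_one (hφ : Function.Involutive φ)
    (hS : ∀ x ∈ S, φ x ∈ S) (ha : a ∈ S) (hφa : φ a = a)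
    (hneither : ∀ x ∈ S, x ∉ N → φ x ∉ N → a ∉ N) (hcard : #(S \ N) = #(N ∩ S) + 1) :
    a ∉ N := by
  intro haN
  have hsub : (S \ N).image φ ⊆ (N ∩ S).erase a := by
    intro y hy
    obtain ⟨x, hx, rfl⟩ := mem_image.mp hy
    obtain ⟨hxS, hxN⟩ := mem_sdiff.mp hx
    refine mem_erase.mpr ⟨fun h => ?_, mem_inter.mpr ⟨?_, hS x hxS⟩⟩
    · exact hxN (hφ.injective (h.trans hφa.symm) ▸ haN)
    · exact not_not.mp fun h => hneither x hxS hxN h haN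
  have := card_le_card hsub
  rw [card_image_of_injective _ hφ.injective, card_erase_of_mem (mem_inter.mpr ⟨haN, ha⟩)] at this
  omega

lemma image_inter_eq_erase_sdiff (hφ : Function.Involutive φ)
    (hS : ∀ x ∈ S, φ x ∈ S) (ha : a ∈ S) (hφa : φ a = a)
    (hboth : ∀ x ∈ S, x ∈ N → φ x ∈ N → a ∈ N)
    (hneither : ∀ x ∈ S, x ∉ N → φ x ∉ N → a ∉ N) (hcard : #(S \ N) = #(N ∩ S) + 1) :
    (N ∩ S).image φ = (S \ N).erase a := by
  have haN := notMem_of_card_sdiff_eq_card_inter_add_one hφ hS ha hφa hneither hcard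
  refine eq_of_subset_of_card_le (fun y hy => ?_) ?_
  · obtain ⟨x, hx, rfl⟩ := mem_image.mp hy
    obtain ⟨hxN, hxS⟩ := mem_inter.mp hx
    refine mem_erase.mpr ⟨fun h => ?_, mem_sdiff.mpr ⟨hS x hxS, fun h => haN (hboth x hxS hxN h)⟩⟩
    exact haN (hφ.injective (h.trans hφa.symm) ▸ hxN)
  · rw [card_image_of_injective _ hφ.injective, card_erase_of_mem (mem_sdiff.mpr ⟨ha, haN⟩)]
    omega

lemma card_sdiff_inter_eq_card_inter_inter_add_one (hφ : Function.Involutive φ)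
    (hS : ∀ x ∈ S, φ x ∈ S) (ha : a ∈ S) (hφa : φ a = a)
    (hboth : ∀ x ∈ S, x ∈ N → φ x ∈ N → a ∈ N)
    (hneither : ∀ x ∈ S, x ∉ N → φ x ∉ N → a ∉ N) (hcard : #(S \ N) = #(N ∩ S) + 1)
    {K : Finset ι} (hK : ∀ x ∈ K, φ x ∈ K) (haK : a ∈ K) :
    #((S \ N) ∩ K) = #(N ∩ S ∩ K) + 1 := by
  have haN := notMem_of_card_sdiff_eq_card_inter_add_one hφ hS ha hφa hneither hcard
  have himage := image_inter_eq_erase_sdiff hφ hS ha hφa hboth hneither hcard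
  have hpair : #(N ∩ S ∩ K) = #((S \ N).erase a ∩ K) :=
    card_inter_eq_of_involutive hφ (fun x hx => himage ▸ mem_image_of_mem φ hx)
      (fun x hx => hφ.mem_finset_image.mp (himage ▸ hx)) hK
  rw [hpair, erase_inter, card_erase_add_one (mem_inter.mpr ⟨mem_sdiff.mpr ⟨ha, haN⟩, haK⟩)]

end Involution

section Reflections

variable {V : Type*} [NormedAddCommGroup V] [InnerProductSpace ℝ V]

lemma sigmaRefl_involutive (α : V) : Function.Involutive (sigmaRefl α) :=
  Submodule.reflection_reflection _

lemma sigmaRefl_self (α : V) : sigmaRefl α α = -α :=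
  Submodule.reflection_orthogonalComplement_singleton_eq_neg α

lemma sub_sigmaRefl (α v : V) : v - sigmaRefl α v = (2 * ⟪α, v⟫ / ‖α‖ ^ 2) • α := by
  rw [sigmaRefl, Submodule.reflection_orthogonal_apply, Submodule.reflection_apply,
    Submodule.starProjection_singleton]
  simp only [RCLike.ofReal_real_eq_id, id_eq]
  match_scalars <;> ring

lemma exists_pos_smul_eq_sub_sigmaRefl {f α β : V} (hα : 0 < ⟪f, α⟫)
    (h : ⟪f, sigmaRefl α β⟫ < ⟪f, β⟫) : ∃ c : ℝ, 0 < c ∧ β - sigmaRefl α β = c • α := by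
  refine ⟨_, ?_, sub_sigmaRefl α β⟩
  have : 0 < ⟪f, β - sigmaRefl α β⟫ := by rw [inner_sub_right]; linarith
  rw [sub_sigmaRefl, real_inner_smul_right] at this
  exact pos_of_mul_pos_left this hα.le

lemma exists_pos_inner_symm_add_eq {f α β : V} (hα : 0 < ⟪f, α⟫)
    (hβ : ⟪f, sigmaRefl α β⟫ < ⟪f, β⟫) (w : V ≃ₗᵢ[ℝ] V) :
    ∃ c : ℝ, 0 < c ∧ ⟪f, w.symm β⟫ + ⟪f, w.symm (-sigmaRefl α β)⟫ = c * ⟪f, w.symm α⟫ := by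
  obtain ⟨c, hc, h⟩ := exists_pos_smul_eq_sub_sigmaRefl hα hβ
  refine ⟨c, hc, ?_⟩
  rw [← inner_add_right, ← map_add, ← sub_eq_add_neg, h, map_smul, real_inner_smul_right]

lemma LinearIsometryEquiv.symm_eq_self_of_involutive {t : V ≃ₗᵢ[ℝ] V}
    (ht : Function.Involutive t) : t.symm = t :=
  LinearIsometryEquiv.ext fun y => t.symm_apply_eq.mpr (ht y).symm

variable {Φ : Finset V}

lemma sigmaRefl_mem_Weyl {α : V} (hα : α ∈ Φ) : sigmaRefl α ∈ Weyl Φ :=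
  Subgroup.subset_closure ⟨α, hα, rfl⟩

variable [DecidableEq V]

lemma apply_mem_iff_of_mem_Weyl (hrefl : ∀ α ∈ Φ, Φ.image (sigmaRefl α) = Φ)
    {g : V ≃ₗᵢ[ℝ] V} (hg : g ∈ Weyl Φ) (x : V) : g x ∈ Φ ↔ x ∈ Φ := by
  induction hg using Subgroup.closure_induction generalizing x with
  | mem g hg =>
    obtain ⟨α, hα, rfl⟩ := hg
    conv_lhs => rw [← hrefl α hα]
    exact (sigmaRefl α).injective.mem_finset_image
  | one => rfl
  | mul g h _ _ hg hh => exact (hg (h x)).trans (hh x)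
  | inv g _ hg => simpa using (hg (g⁻¹ x)).symm

lemma neg_mem_of_sigmaRefl_image_eq (hrefl : ∀ α ∈ Φ, Φ.image (sigmaRefl α) = Φ) {x : V}
    (hx : x ∈ Φ) : -x ∈ Φ := by
  rw [← sigmaRefl_self, ← hrefl x hx]
  exact mem_image_of_mem _ hx

end Reflections

lemma mem_negSet {V : Type*} [NormedAddCommGroup V] [DecidableEq V] {Pos : Finset V} {x : V} :
    x ∈ negSet Pos ↔ -x ∈ Pos := by
  rw [negSet, neg_involutive.mem_finset_image]

section PositiveSystem

variable {V : Type*} [NormedAddCommGroup V] [InnerProductSpace ℝ V] [DecidableEq V]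

lemma mem_image_linearIsometryEquiv {A : Finset V} {g : V ≃ₗᵢ[ℝ] V} {x : V} :
    x ∈ A.image g ↔ g.symm x ∈ A := by
  conv_lhs => rw [← g.apply_symm_apply x]
  exact g.injective.mem_finset_image

def posRoots (Φ : Finset V) (f : V) : Finset V := Φ.filter fun α => 0 < ⟪f, α⟫

def invSet (Pos : Finset V) (w : V ≃ₗᵢ[ℝ] V) : Finset V := Pos ∩ (negSet Pos).image w

variable {Φ : Finset V} {f : V}

lemma invSet_posRoots_subset (w : V ≃ₗᵢ[ℝ] V) : invSet (posRoots Φ f) w ⊆ Φ :=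
  inter_subset_left.trans (filter_subset _ _)

lemma mem_invSet_posRoots (hrefl : ∀ α ∈ Φ, Φ.image (sigmaRefl α) = Φ) {g : V ≃ₗᵢ[ℝ] V}
    (hg : g ∈ Weyl Φ) {x : V} :
    x ∈ invSet (posRoots Φ f) g ↔ x ∈ Φ ∧ 0 < ⟪f, x⟫ ∧ ⟪f, g.symm x⟫ < 0 := by
  have hgx : g.symm x ∈ Φ ↔ x ∈ Φ := apply_mem_iff_of_mem_Weyl hrefl (inv_mem hg) x
  simp only [invSet, posRoots, mem_inter, mem_image_linearIsometryEquiv, mem_negSet, mem_filter,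
    inner_neg_right, neg_pos]
  constructor
  · rintro ⟨⟨hx, hfx⟩, -, hfg⟩
    exact ⟨hx, hfx, hfg⟩
  · rintro ⟨hx, hfx, hfg⟩
    exact ⟨⟨hx, hfx⟩, neg_mem_of_sigmaRefl_image_eq hrefl (hgx.mpr hx), hfg⟩

lemma inner_symm_pos_of_notMem_invSet (hrefl : ∀ α ∈ Φ, Φ.image (sigmaRefl α) = Φ)
    (hf : ∀ α ∈ Φ, ⟪f, α⟫ ≠ 0) {g : V ≃ₗᵢ[ℝ] V} (hg : g ∈ Weyl Φ) {x : V} (hxΦ : x ∈ Φ)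
    (hfx : 0 < ⟪f, x⟫) (hx : x ∉ invSet (posRoots Φ f) g) : 0 < ⟪f, g.symm x⟫ := by
  have hgx : g.symm x ∈ Φ := (apply_mem_iff_of_mem_Weyl hrefl (inv_mem hg) x).mpr hxΦ
  exact (hf _ hgx).lt_or_gt.resolve_left fun h =>
    hx ((mem_invSet_posRoots hrefl hg).mpr ⟨hxΦ, hfx, h⟩)

variable {t w : V ≃ₗᵢ[ℝ] V}

lemma apply_mem_invSet_sdiff (hrefl : ∀ α ∈ Φ, Φ.image (sigmaRefl α) = Φ)
    (hf : ∀ α ∈ Φ, ⟪f, α⟫ ≠ 0) (ht : t ∈ Weyl Φ) (ht' : Function.Involutive t) (hw : w ∈ Weyl Φ)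
    {x : V} (hx : x ∈ invSet (posRoots Φ f) (t * w) \ invSet (posRoots Φ f) t) :
    t x ∈ invSet (posRoots Φ f) w \ invSet (posRoots Φ f) t := by
  obtain ⟨hxtw, hxt⟩ := mem_sdiff.mp hx
  have htw : (t * w).symm x = w.symm (t.symm x) := rfl
  rw [mem_invSet_posRoots hrefl (mul_mem ht hw), htw, t.symm_eq_self_of_involutive ht'] at hxtw
  obtain ⟨hxΦ, hfx, hfwtx⟩ := hxtw
  have hftx := inner_symm_pos_of_notMem_invSet hrefl hf ht hxΦ hfx hxt
  rw [t.symm_eq_self_of_involutive ht'] at hftx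
  have htx := (apply_mem_iff_of_mem_Weyl hrefl ht x).mpr hxΦ
  refine mem_sdiff.mpr ⟨(mem_invSet_posRoots hrefl hw).mpr ⟨htx, hftx, hfwtx⟩, fun h => ?_⟩
  rw [mem_invSet_posRoots hrefl ht, t.symm_eq_self_of_involutive ht', ht' x] at h
  linarith [h.2.2]

lemma neg_apply_mem_invSet_self (hrefl : ∀ α ∈ Φ, Φ.image (sigmaRefl α) = Φ) (ht : t ∈ Weyl Φ)
    (ht' : Function.Involutive t) {x : V} (hx : x ∈ invSet (posRoots Φ f) t) :
    -t x ∈ invSet (posRoots Φ f) t := by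
  simp only [mem_invSet_posRoots hrefl ht, t.symm_eq_self_of_involutive ht', map_neg, ht' x,
    inner_neg_right] at hx ⊢
  obtain ⟨hxΦ, hfx, hftx⟩ := hx
  exact ⟨neg_mem_of_sigmaRefl_image_eq hrefl ((apply_mem_iff_of_mem_Weyl hrefl ht x).mpr hxΦ),
    by linarith, by linarith⟩

lemma neg_apply_mem_invSet_sdiff (hrefl : ∀ α ∈ Φ, Φ.image (sigmaRefl α) = Φ) (ht : t ∈ Weyl Φ)
    (ht' : Function.Involutive t) (hw : w ∈ Weyl Φ) {x : V}
    (hx : x ∈ invSet (posRoots Φ f) (t * w) ∩ invSet (posRoots Φ f) t) :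
    -t x ∈ invSet (posRoots Φ f) t \ invSet (posRoots Φ f) w := by
  obtain ⟨hxtw, hxt⟩ := mem_inter.mp hx
  have htw : (t * w).symm x = w.symm (t.symm x) := rfl
  refine mem_sdiff.mpr ⟨neg_apply_mem_invSet_self hrefl ht ht' hxt, fun h => ?_⟩
  simp only [mem_invSet_posRoots hrefl hw, mem_invSet_posRoots hrefl (mul_mem ht hw), htw,
    t.symm_eq_self_of_involutive ht', map_neg, inner_neg_right] at hxtw h
  linarith [hxtw.2.2, h.2.2]

lemma neg_apply_mem_invSet_mul_inter (hrefl : ∀ α ∈ Φ, Φ.image (sigmaRefl α) = Φ)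
    (hf : ∀ α ∈ Φ, ⟪f, α⟫ ≠ 0) (ht : t ∈ Weyl Φ) (ht' : Function.Involutive t) (hw : w ∈ Weyl Φ)
    {x : V} (hx : x ∈ invSet (posRoots Φ f) t \ invSet (posRoots Φ f) w) :
    -t x ∈ invSet (posRoots Φ f) (t * w) ∩ invSet (posRoots Φ f) t := by
  obtain ⟨hxt, hxw⟩ := mem_sdiff.mp hx
  obtain ⟨hxΦ, hfx, -⟩ := (mem_invSet_posRoots hrefl ht).mp hxt
  have hfwx := inner_symm_pos_of_notMem_invSet hrefl hf hw hxΦ hfx hxw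
  have htx := neg_apply_mem_invSet_self hrefl ht ht' hxt
  have htw : (t * w).symm (-t x) = w.symm (t.symm (-t x)) := rfl
  refine mem_inter.mpr ⟨?_, htx⟩
  rw [mem_invSet_posRoots hrefl ht] at htx
  rw [mem_invSet_posRoots hrefl (mul_mem ht hw), htw, t.symm_eq_self_of_involutive ht', map_neg,
    ht' x, map_neg]
  exact ⟨htx.1, htx.2.1, by rw [inner_neg_right]; linarith⟩

lemma card_invSet_mul_inter (hrefl : ∀ α ∈ Φ, Φ.image (sigmaRefl α) = Φ)
    (hf : ∀ α ∈ Φ, ⟪f, α⟫ ≠ 0) (ht : t ∈ Weyl Φ) (ht' : Function.Involutive t) (hw : w ∈ Weyl Φ)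
    {K : Finset V} (hKt : ∀ x ∈ K, t x ∈ K) (hKneg : ∀ x ∈ K, -x ∈ K) :
    #(invSet (posRoots Φ f) (t * w) ∩ K) =
      #((invSet (posRoots Φ f) w \ invSet (posRoots Φ f) t) ∩ K) +
        #((invSet (posRoots Φ f) t \ invSet (posRoots Φ f) w) ∩ K) := by
  have htt : t * (t * w) = w := by
    rw [← mul_assoc, show t * t = 1 from LinearIsometryEquiv.ext ht', one_mul]
  have hnegt : Function.Involutive fun x => -t x := fun x => by simp [ht' x]
  rw [card_inter_eq_card_sdiff_inter_add_card_inter_inter _ (invSet (posRoots Φ f) t)]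
  congr 1
  · refine card_inter_eq_of_involutive ht' (fun x hx => ?_) (fun x hx => ?_) hKt
    · exact apply_mem_invSet_sdiff hrefl hf ht ht' hw hx
    · exact apply_mem_invSet_sdiff hrefl hf ht ht' (mul_mem ht hw) (htt.symm ▸ hx)
  · exact card_inter_eq_of_involutive hnegt
      (fun x hx => neg_apply_mem_invSet_sdiff hrefl ht ht' hw hx)
      (fun x hx => neg_apply_mem_invSet_mul_inter hrefl hf ht ht' hw hx)
      (fun x hx => hKneg _ (hKt x hx))

lemma card_invSet_mul (hrefl : ∀ α ∈ Φ, Φ.image (sigmaRefl α) = Φ)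
    (hf : ∀ α ∈ Φ, ⟪f, α⟫ ≠ 0) (ht : t ∈ Weyl Φ) (ht' : Function.Involutive t) (hw : w ∈ Weyl Φ) :
    #(invSet (posRoots Φ f) (t * w)) =
      #(invSet (posRoots Φ f) w \ invSet (posRoots Φ f) t) +
        #(invSet (posRoots Φ f) t \ invSet (posRoots Φ f) w) := by
  have h := card_invSet_mul_inter hrefl hf ht ht' hw
    (fun x => (apply_mem_iff_of_mem_Weyl hrefl ht x).mpr)
    (fun x => neg_mem_of_sigmaRefl_image_eq hrefl)
  simpa only [inter_eq_left.mpr (invSet_posRoots_subset _),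
    inter_eq_left.mpr (sdiff_subset.trans (invSet_posRoots_subset _))] using h

variable {α β : V}

lemma mem_invSet_sigmaRefl_self (hrefl : ∀ α ∈ Φ, Φ.image (sigmaRefl α) = Φ)
    (hα : α ∈ posRoots Φ f) : α ∈ invSet (posRoots Φ f) (sigmaRefl α) := by
  obtain ⟨hαΦ, hfα⟩ := mem_filter.mp hα
  rw [mem_invSet_posRoots hrefl (sigmaRefl_mem_Weyl hαΦ),
    (sigmaRefl α).symm_eq_self_of_involutive (sigmaRefl_involutive α), sigmaRefl_self,
    inner_neg_right]
  exact ⟨hαΦ, hfα, neg_neg_of_pos hfα⟩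

lemma mem_invSet_of_mem_invSet_sigmaRefl (hrefl : ∀ α ∈ Φ, Φ.image (sigmaRefl α) = Φ)
    (hw : w ∈ Weyl Φ) (hα : α ∈ posRoots Φ f) (hβ : β ∈ invSet (posRoots Φ f) (sigmaRefl α))
    (h₁ : β ∈ invSet (posRoots Φ f) w) (h₂ : -sigmaRefl α β ∈ invSet (posRoots Φ f) w) :
    α ∈ invSet (posRoots Φ f) w := by
  obtain ⟨hαΦ, hfα⟩ := mem_filter.mp hα
  rw [mem_invSet_posRoots hrefl (sigmaRefl_mem_Weyl hαΦ),
    (sigmaRefl α).symm_eq_self_of_involutive (sigmaRefl_involutive α)] at hβ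
  obtain ⟨c, hc, hsum⟩ :=
    exists_pos_inner_symm_add_eq (β := β) hfα (by linarith [hβ.2.1, hβ.2.2]) w
  rw [mem_invSet_posRoots hrefl hw] at h₁ h₂ ⊢
  exact ⟨hαΦ, hfα, neg_of_mul_neg_right (by linarith [h₁.2.2, h₂.2.2]) hc.le⟩

lemma notMem_invSet_of_mem_invSet_sigmaRefl (hrefl : ∀ α ∈ Φ, Φ.image (sigmaRefl α) = Φ)
    (hf : ∀ α ∈ Φ, ⟪f, α⟫ ≠ 0) (hw : w ∈ Weyl Φ) (hα : α ∈ posRoots Φ f)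
    (hβ : β ∈ invSet (posRoots Φ f) (sigmaRefl α))
    (h₁ : β ∉ invSet (posRoots Φ f) w) (h₂ : -sigmaRefl α β ∉ invSet (posRoots Φ f) w) :
    α ∉ invSet (posRoots Φ f) w := by
  obtain ⟨hαΦ, hfα⟩ := mem_filter.mp hα
  have hσ := sigmaRefl_mem_Weyl hαΦ
  have hσβ := neg_apply_mem_invSet_self hrefl hσ (sigmaRefl_involutive α) hβ
  rw [mem_invSet_posRoots hrefl hσ] at hβ hσβ
  have hβw := inner_symm_pos_of_notMem_invSet hrefl hf hw hβ.1 hβ.2.1 h₁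
  have hσβw := inner_symm_pos_of_notMem_invSet hrefl hf hw hσβ.1 hσβ.2.1 h₂
  rw [(sigmaRefl α).symm_eq_self_of_involutive (sigmaRefl_involutive α)] at hβ
  obtain ⟨c, hc, hsum⟩ :=
    exists_pos_inner_symm_add_eq (β := β) hfα (by linarith [hβ.2.1, hβ.2.2]) w
  intro hαw
  have := ((mem_invSet_posRoots hrefl hw).mp hαw).2.2
  nlinarith

end PositiveSystem

theorem statement13_general
    (Φ : Finset E)
    (hrefl : ∀ α ∈ Φ, Φ.image (sigmaRefl α) = Φ)
    (f : E) (hf : ∀ α ∈ Φ, ⟪f, α⟫ ≠ 0)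
    (Pos : Finset E) (hPos : Pos = Φ.filter fun α => 0 < ⟪f, α⟫)
    (ΦK : Finset E) (hKsym : ΦK.image (fun x => -x) = ΦK)
    (hKstab : ∀ β ∈ ΦK, ΦK.image (sigmaRefl β) = ΦK)
    (α : E) (hαK : α ∈ ΦK) (hαP : α ∈ Pos)
    (w : E ≃ₗᵢ[ℝ] E) (hw : w ∈ Weyl Φ)
    (hlen : len Pos (sigmaRefl α * w) = len Pos w + 1) :
    lenK Pos ΦK (sigmaRefl α * w) = lenK Pos ΦK w + 1 := by
  obtain rfl : Pos = posRoots Φ f := hPos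
  have hσ := sigmaRefl_mem_Weyl (mem_filter.mp hαP).1
  have hσ' := sigmaRefl_involutive α
  have hKσ : ∀ x ∈ ΦK, sigmaRefl α x ∈ ΦK := fun x hx => hKstab α hαK ▸ mem_image_of_mem _ hx
  have hKneg : ∀ x ∈ ΦK, -x ∈ ΦK := fun x hx => hKsym ▸ mem_image_of_mem _ hx
  have hsplit := card_invSet_mul hrefl hf hσ hσ' hw
  change #(invSet _ _) = #(invSet _ _) + 1 at hlen
  set N := invSet (posRoots Φ f) w
  set S := invSet (posRoots Φ f) (sigmaRefl α)
  have hcard : #(S \ N) = #(N ∩ S) + 1 := by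
    have := card_sdiff_add_card_inter N S
    omega
  have hpair := card_sdiff_inter_eq_card_inter_inter_add_one (φ := fun x => -sigmaRefl α x)
    (fun x => by simp [hσ' x]) (fun x hx => neg_apply_mem_invSet_self hrefl hσ hσ' hx)
    (mem_invSet_sigmaRefl_self hrefl hαP) (by simp [sigmaRefl_self])
    (fun β hβ => mem_invSet_of_mem_invSet_sigmaRefl hrefl hw hαP hβ)
    (fun β hβ => notMem_invSet_of_mem_invSet_sigmaRefl hrefl hf hw hαP hβ) hcard
    (fun x hx => hKneg _ (hKσ x hx)) hαK
  change #(invSet _ _ ∩ ΦK) = #(N ∩ ΦK) + 1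
  rw [card_invSet_mul_inter hrefl hf hσ hσ' hw hKσ hKneg, hpair,
    card_inter_eq_card_sdiff_inter_add_card_inter_inter N S ΦK, add_assoc]

theorem statement13
    (Φ : Finset E) (h0 : (0 : E) ∉ Φ)
    (hrefl : ∀ α ∈ Φ, Φ.image (sigmaRefl α) = Φ)
    (hred : ∀ α ∈ Φ, {x : E | x ∈ Φ ∧ ∃ t : ℝ, x = t • α} = {α, -α})
    (f : E) (hf : ∀ α ∈ Φ, ⟪f, α⟫ ≠ 0)
    (Pos : Finset E) (hPos : Pos = Φ.filter fun α => 0 < ⟪f, α⟫)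
    (ΦK : Finset E) (hKsub : ΦK ⊆ Φ) (hKsym : ΦK.image (fun x => -x) = ΦK)
    (hKstab : ∀ β ∈ ΦK, ΦK.image (sigmaRefl β) = ΦK)
    (α : E) (hαK : α ∈ ΦK) (hαP : α ∈ Pos)
    (w : E ≃ₗᵢ[ℝ] E) (hw : w ∈ Weyl Φ)
    (hlen : len Pos (sigmaRefl α * w) = len Pos w + 1) :
    lenK Pos ΦK (sigmaRefl α * w) = lenK Pos ΦK w + 1 :=
  statement13_general Φ hrefl f hf Pos hPos ΦK hKsym hKstab α hαK hαP w hw hlen
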